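/- For all integers d ≥ 3 and d^⊥ ≥ 3, N(d, d^⊥) ≥ d + d^⊥. -/

import Mathlib

/-!
Let `x` be a nonzero codeword of minimal weight `w ≥ d` and project `C` onto the
`n - w` coordinates where `x` vanishes. Over `GF(2)` the kernel is `{0, x}`. The projection is not
onto: a preimage `y` of a unit vector would give nonzero codewords `y`, `y + x` of total weight
`w + 2 < 2w`. Hence `dim C ≤ n - w ≤ n - d`, unless `x` has full support; then `C = {0, 𝟙}` and
`C^⊥` has a word of weight two. Adding this bound for `C` and for `C^⊥` gives `d + d^⊥ ≤ n`.

Since `sInf ∅ = 0`, one also needs some code with both distances large: the Reed–Muller code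
`RM(D, 2D + 1)`, built by iterating the Plotkin construction `(u | u + v)`, is self-dual with
minimum distance `2 ^ (D + 1)`.
-/

/-- The dual code of a binary linear code `C ⊆ GF(2)^n`. -/
def dualCode {n : ℕ} (C : Submodule (ZMod 2) (Fin n → ZMod 2)) :
    Submodule (ZMod 2) (Fin n → ZMod 2) where
  carrier := {u | ∀ v ∈ C, dotProduct u v = 0}
  zero_mem' := by intro v _; simp
  add_mem' := by
    intro a b ha hb v hv
    rw [Set.mem_setOf_eq] at *
    rw [add_dotProduct, ha v hv, hb v hv, add_zero]
  smul_mem' := by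
    intro c u hu v hv
    rw [Set.mem_setOf_eq] at *
    rw [smul_dotProduct, hu v hv, smul_zero]

/-- The minimum Hamming distance of the code `C` is at least `d`. -/
def MinDistGE {n : ℕ} (C : Submodule (ZMod 2) (Fin n → ZMod 2)) (d : ℕ) : Prop :=
  ∀ c ∈ C, c ≠ 0 → d ≤ hammingNorm c

/-- `N d d⊥` is the minimum length `n` for which there exists a binary linear code of
length `n` (a subspace `C` of `GF(2)^n` with `0 < dim C < n`) with minimum Hamming
distance at least `d` and dual distance at least `d⊥`. -/
noncomputable def N (d dp : ℕ) : ℕ :=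
  sInf {n | ∃ C : Submodule (ZMod 2) (Fin n → ZMod 2),
    0 < Module.finrank (ZMod 2) C ∧ Module.finrank (ZMod 2) C < n ∧
    MinDistGE C d ∧ MinDistGE (dualCode C) dp}


open Module Finset

lemma MinDistGE.mono {n d d' : ℕ} {C : Submodule (ZMod 2) (Fin n → ZMod 2)} (h : MinDistGE C d)
    (hd : d' ≤ d) : MinDistGE C d' :=
  fun c hc hc0 => hd.trans (h c hc hc0)

lemma minDistGE_bot {n d : ℕ} : MinDistGE (⊥ : Submodule (ZMod 2) (Fin n → ZMod 2)) d :=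
  fun _ hc hc0 => absurd ((Submodule.mem_bot _).1 hc) hc0

section Hamming

variable {ι : Type*} [Fintype ι]

lemma card_subtype_eq_zero_add_hammingNorm {β : Type*} [Zero β] [DecidableEq β] (x : ι → β) :
    Fintype.card {i // x i = 0} + hammingNorm x = Fintype.card ι := by
  rw [Fintype.card_subtype, hammingNorm]
  exact card_filter_add_card_filter_not _

lemma eq_of_support_subset_of_hammingNorm_le {x y : ι → ZMod 2} (hsupp : ∀ i, x i = 0 → y i = 0)
    (hwt : hammingNorm x ≤ hammingNorm y) : y = x := by
  have hsub : univ.filter (y · ≠ 0) ⊆ univ.filter (x · ≠ 0) := by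
    intro i; simpa only [mem_filter_univ] using mt (hsupp i)
  have hsupp_eq := eq_of_subset_of_card_le hsub hwt
  funext i
  by_cases hxi : x i = 0
  · rw [hxi, hsupp i hxi]
  · have hyi : i ∈ univ.filter (y · ≠ 0) := hsupp_eq ▸ (mem_filter_univ i).2 hxi
    rw [mem_filter_univ] at hyi
    have key : ∀ a b : ZMod 2, a ≠ 0 → b ≠ 0 → b = a := by decide
    exact key _ _ hxi hyi

lemma hammingNorm_add_hammingNorm_add (x y : ι → ZMod 2) :
    hammingNorm y + hammingNorm (y + x) = hammingNorm x + 2 * #{i | x i = 0 ∧ y i ≠ 0} := by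
  simp only [hammingNorm, card_filter, ← sum_add_distrib, mul_sum, Pi.add_apply]
  have key : ∀ a b : ZMod 2, ((if b ≠ 0 then 1 else 0) + if b + a ≠ 0 then 1 else 0) =
      (if a ≠ 0 then 1 else 0) + 2 * if a = 0 ∧ b ≠ 0 then 1 else 0 := by decide
  exact sum_congr rfl fun i _ => key (x i) (y i)

end Hamming

section DualCode

variable {n : ℕ}

lemma dualCode_eq_comap_dualAnnihilator (C : Submodule (ZMod 2) (Fin n → ZMod 2)) :
    dualCode C = C.dualAnnihilator.comap (dotProductEquiv (ZMod 2) (Fin n)).toLinearMap := by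
  ext u
  simp [dualCode, Submodule.mem_dualAnnihilator]

lemma finrank_add_finrank_dualCode (C : Submodule (ZMod 2) (Fin n → ZMod 2)) :
    finrank (ZMod 2) C + finrank (ZMod 2) (dualCode C) = n := by
  rw [dualCode_eq_comap_dualAnnihilator, Submodule.comap_equiv_eq_map_symm,
    LinearEquiv.finrank_map_eq, Subspace.finrank_add_finrank_dualAnnihilator_eq,
    finrank_fin_fun]

lemma le_dualCode_dualCode (C : Submodule (ZMod 2) (Fin n → ZMod 2)) :
    C ≤ dualCode (dualCode C) :=
  fun v hv u hu => dotProduct_comm v u ▸ hu v hv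

lemma dualCode_dualCode (C : Submodule (ZMod 2) (Fin n → ZMod 2)) :
    dualCode (dualCode C) = C := by
  refine (Submodule.eq_of_le_of_finrank_eq (le_dualCode_dualCode C) ?_).symm
  have := finrank_add_finrank_dualCode C
  have := finrank_add_finrank_dualCode (dualCode C)
  omega

lemma dualCode_bot : dualCode (⊥ : Submodule (ZMod 2) (Fin n → ZMod 2)) = ⊤ :=
  eq_top_iff.2 fun u _ v hv => by rw [(Submodule.mem_bot _).1 hv, dotProduct_zero]

lemma dualCode_top : dualCode (⊤ : Submodule (ZMod 2) (Fin n → ZMod 2)) = ⊥ := by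
  rw [← dualCode_bot, dualCode_dualCode]

end DualCode

section Singleton

variable {ι : Type*} [Fintype ι] {C : Submodule (ZMod 2) (ι → ZMod 2)} {x : ι → ZMod 2}

noncomputable def restrictZeros (C : Submodule (ZMod 2) (ι → ZMod 2)) (x : ι → ZMod 2) :
    C →ₗ[ZMod 2] ({i // x i = 0} → ZMod 2) :=
  (LinearMap.funLeft (ZMod 2) (ZMod 2) Subtype.val).domRestrict C

lemma ker_restrictZeros_le_span (hx : x ∈ C)
    (hmin : ∀ y ∈ C, y ≠ 0 → hammingNorm x ≤ hammingNorm y) :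
    LinearMap.ker (restrictZeros C x) ≤ Submodule.span (ZMod 2) {⟨x, hx⟩} := by
  rintro ⟨y, hy⟩ hker
  rcases eq_or_ne y 0 with rfl | hy0
  · exact Submodule.zero_mem _
  · have hyx : y = x := eq_of_support_subset_of_hammingNorm_le
      (fun i hi => congrFun (LinearMap.mem_ker.1 hker) ⟨i, hi⟩) (hmin y hy hy0)
    subst hyx
    exact Submodule.mem_span_singleton_self _

lemma range_restrictZeros_ne_top (hx : x ∈ C)
    (hmin : ∀ y ∈ C, y ≠ 0 → hammingNorm x ≤ hammingNorm y) (hw : 2 < hammingNorm x)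
    {i₀ : ι} (hi₀ : x i₀ = 0) :
    LinearMap.range (restrictZeros C x) ≠ ⊤ := by
  classical
  intro htop
  obtain ⟨⟨y, hy⟩, hyi⟩ := LinearMap.range_eq_top.1 htop (Pi.single ⟨i₀, hi₀⟩ 1)
  have hy_on_zeros (i : ι) (hi : x i = 0) : y i = if i = i₀ then 1 else 0 := by
    simpa [restrictZeros, Pi.single_apply] using congrFun hyi ⟨i, hi⟩
  have hy₀ : y i₀ = 1 := by simpa using hy_on_zeros i₀ hi₀
  -- on the support of `x` exactly one of `y`, `y + x` is nonzero, off it both equal `δ_{i₀}`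
  have hsum : hammingNorm y + hammingNorm (y + x) = hammingNorm x + 2 := by
    rw [hammingNorm_add_hammingNorm_add]
    have hoff_support : ({i | x i = 0 ∧ y i ≠ 0} : Finset ι) = {i₀} := by
      ext i
      simp only [mem_filter_univ, mem_singleton]
      constructor
      · rintro ⟨hi, hyi⟩
        by_contra hne
        simp [hy_on_zeros i hi, hne] at hyi
      · rintro rfl
        simp [hi₀, hy₀]
    rw [hoff_support, card_singleton]
  have h₁ := hmin y hy (fun h => by simp [h] at hy₀)
  have h₂ := hmin (y + x) (C.add_mem hy hx) (fun h => by simpa [hi₀, hy₀] using congrFun h i₀)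
  omega

lemma finrank_add_hammingNorm_le (hx : x ∈ C)
    (hmin : ∀ y ∈ C, y ≠ 0 → hammingNorm x ≤ hammingNorm y)
    (hw : 2 < hammingNorm x) {i₀ : ι} (hi₀ : x i₀ = 0) :
    finrank (ZMod 2) C + hammingNorm x ≤ Fintype.card ι := by
  have hker : finrank (ZMod 2) (LinearMap.ker (restrictZeros C x)) ≤ 1 :=
    (Submodule.finrank_mono (ker_restrictZeros_le_span hx hmin)).trans
      (finrank_span_le_card _ |>.trans (by simp))
  have hrange : finrank (ZMod 2) (LinearMap.range (restrictZeros C x)) <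
      Fintype.card {i // x i = 0} := by
    simpa using Submodule.finrank_lt (range_restrictZeros_ne_top hx hmin hw hi₀)
  have hrank_nullity := LinearMap.finrank_range_add_finrank_ker (restrictZeros C x)
  have hcard := card_subtype_eq_zero_add_hammingNorm x
  omega

end Singleton

lemma exists_eq_zero_of_minWeight {n : ℕ} {C : Submodule (ZMod 2) (Fin n → ZMod 2)}
    {x : Fin n → ZMod 2} (hmin : ∀ y ∈ C, y ≠ 0 → hammingNorm x ≤ hammingNorm y)
    (hn : 2 ≤ n) (hdual : MinDistGE (dualCode C) 3) : ∃ i, x i = 0 := by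
  by_contra! hx0
  let i₀ : Fin n := ⟨0, by omega⟩
  let i₁ : Fin n := ⟨1, by omega⟩
  -- `C = {0, 𝟙}`, so the weight-two word `δ_{i₀} + δ_{i₁}` lies in the dual code
  have hC : ∀ y ∈ C, y i₀ = y i₁ := by
    intro y hy
    rcases eq_or_ne y 0 with rfl | hy0
    · rfl
    · have hyx : y = x :=
        eq_of_support_subset_of_hammingNorm_le (fun i hi => absurd hi (hx0 i)) (hmin y hy hy0)
      have key : ∀ a b : ZMod 2, a ≠ 0 → b ≠ 0 → a = b := by decide
      rw [hyx]
      exact key _ _ (hx0 i₀) (hx0 i₁)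
  set u : Fin n → ZMod 2 := Pi.single i₀ 1 + Pi.single i₁ 1 with hu
  have hmem : u ∈ dualCode C := by
    intro y hy
    simp [hu, add_dotProduct, single_dotProduct, hC y hy, ZModModule.add_self]
  have hne : u ≠ 0 := fun h => by
    simpa [hu, i₀, i₁, Pi.single_apply] using congrFun h i₀
  have hwt : hammingNorm u ≤ 2 := by
    refine (card_le_card (t := {i₀, i₁}) fun i hi => ?_).trans card_le_two
    contrapose! hi
    simp_all [Pi.single_apply]
  have := hdual _ hmem hne
  omega

lemma finrank_add_le_of_minDistGE {n d : ℕ} {C : Submodule (ZMod 2) (Fin n → ZMod 2)}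
    (hC : C ≠ ⊥) (hd : 3 ≤ d) (hCd : MinDistGE C d) (hdual : MinDistGE (dualCode C) 3) :
    finrank (ZMod 2) C + d ≤ n := by
  obtain ⟨c, hc, hc0⟩ := Submodule.exists_mem_ne_zero_of_ne_bot hC
  obtain ⟨x, ⟨hx, hx0⟩, hmin⟩ := Set.exists_min_image {y | y ∈ C ∧ y ≠ 0} hammingNorm
    (Set.toFinite _) ⟨c, hc, hc0⟩
  have hdx := hCd x hx hx0
  have hxn : hammingNorm x ≤ n := hammingNorm_le_card_fintype.trans_eq (Fintype.card_fin n)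
  have hmin' : ∀ y ∈ C, y ≠ 0 → hammingNorm x ≤ hammingNorm y := fun y hy hy0 => hmin y ⟨hy, hy0⟩
  obtain ⟨i₀, hi₀⟩ := exists_eq_zero_of_minWeight hmin' (by omega) hdual
  have := finrank_add_hammingNorm_le hx hmin' (by omega) hi₀
  rw [Fintype.card_fin] at this
  omega

lemma add_le_of_minDistGE {n d dp : ℕ} {C : Submodule (ZMod 2) (Fin n → ZMod 2)}
    (hd : 3 ≤ d) (hdp : 3 ≤ dp) (hk : 0 < finrank (ZMod 2) C) (hkn : finrank (ZMod 2) C < n)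
    (hC : MinDistGE C d) (hC' : MinDistGE (dualCode C) dp) : d + dp ≤ n := by
  have hrank := finrank_add_finrank_dualCode C
  have h₁ := finrank_add_le_of_minDistGE (Submodule.one_le_finrank_iff.1 hk) hd hC (hC'.mono hdp)
  have h₂ := finrank_add_le_of_minDistGE (C := dualCode C)
    (Submodule.one_le_finrank_iff.1 (by omega)) hdp hC'
    (by rw [dualCode_dualCode]; exact hC.mono hd)
  omega

lemma hammingNorm_append {β : Type*} [Zero β] [DecidableEq β] {m n : ℕ} (u : Fin m → β)
    (v : Fin n → β) : hammingNorm (Fin.append u v) = hammingNorm u + hammingNorm v := by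
  simp only [hammingNorm, card_filter, Fin.sum_univ_add, Fin.append_left, Fin.append_right]

lemma append_dotProduct_append {α : Type*} [Mul α] [AddCommMonoid α] {m n : ℕ}
    (u u' : Fin m → α) (v v' : Fin n → α) :
    Fin.append u v ⬝ᵥ Fin.append u' v' = u ⬝ᵥ u' + v ⬝ᵥ v' := by
  simp only [dotProduct, Fin.sum_univ_add, Fin.append_left, Fin.append_right]

section Plotkin

variable {n : ℕ}

def plotkinMap (n : ℕ) :
    (Fin n → ZMod 2) × (Fin n → ZMod 2) →ₗ[ZMod 2] (Fin (n + n) → ZMod 2) where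
  toFun p := Fin.append p.1 (p.1 + p.2)
  map_add' p q := by
    funext i
    induction i using Fin.addCases
    · simp only [Fin.append_left, Pi.add_apply, Prod.fst_add]
    · simp only [Fin.append_right, Pi.add_apply, Prod.fst_add, Prod.snd_add]
      exact add_add_add_comm _ _ _ _
  map_smul' c p := by
    funext i
    induction i using Fin.addCases
    · simp only [Fin.append_left, Pi.smul_apply, Prod.smul_fst, RingHom.id_apply]
    · simp only [Fin.append_right, Pi.add_apply, Pi.smul_apply, Prod.smul_fst, Prod.smul_snd,
        RingHom.id_apply, smul_add]

def plotkin (C₁ C₂ : Submodule (ZMod 2) (Fin n → ZMod 2)) :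
    Submodule (ZMod 2) (Fin (n + n) → ZMod 2) :=
  (C₁.prod C₂).map (plotkinMap n)

lemma mem_plotkin {C₁ C₂ : Submodule (ZMod 2) (Fin n → ZMod 2)} {c : Fin (n + n) → ZMod 2} :
    c ∈ plotkin C₁ C₂ ↔ ∃ u ∈ C₁, ∃ v ∈ C₂, Fin.append u (u + v) = c := by
  simp [plotkin, plotkinMap, and_assoc]

lemma plotkin_mono {C₁ C₂ D₁ D₂ : Submodule (ZMod 2) (Fin n → ZMod 2)} (h₁ : C₁ ≤ D₁)
    (h₂ : C₂ ≤ D₂) : plotkin C₁ C₂ ≤ plotkin D₁ D₂ :=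
  Submodule.map_mono (Submodule.prod_mono h₁ h₂)

lemma plotkin_top_top : plotkin (⊤ : Submodule (ZMod 2) (Fin n → ZMod 2)) ⊤ = ⊤ := by
  refine eq_top_iff.2 fun c _ => mem_plotkin.2 ?_
  refine ⟨fun i => c (Fin.castAdd n i), trivial,
    (fun i => c (Fin.natAdd n i)) - fun i => c (Fin.castAdd n i), trivial, ?_⟩
  rw [add_sub_cancel, Fin.append_castAdd_natAdd]

lemma minDistGE_plotkin {C₁ C₂ : Submodule (ZMod 2) (Fin n → ZMod 2)} {d₁ d₂ : ℕ}
    (h₁ : MinDistGE C₁ d₁) (h₂ : MinDistGE C₂ d₂) :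
    MinDistGE (plotkin C₁ C₂) (min (2 * d₁) d₂) := by
  rintro _ hc hc0
  obtain ⟨u, hu, v, hv, rfl⟩ := mem_plotkin.1 hc
  have hpos := hammingNorm_pos_iff.2 hc0
  rw [hammingNorm_append] at hpos ⊢
  rcases eq_or_ne v 0 with rfl | hv0
  · rw [add_zero] at hpos ⊢
    have := h₁ u hu (hammingNorm_pos_iff.1 (by omega))
    omega
  · have := h₂ v hv hv0
    have := hammingNorm_add_hammingNorm_add v u
    omega

lemma dualCode_plotkin {C₁ C₂ : Submodule (ZMod 2) (Fin n → ZMod 2)} (h : C₂ ≤ C₁) :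
    dualCode (plotkin C₁ C₂) = plotkin (dualCode C₂) (dualCode C₁) := by
  apply le_antisymm
  · intro c hc
    set a : Fin n → ZMod 2 := fun i => c (Fin.castAdd n i)
    set b : Fin n → ZMod 2 := fun i => c (Fin.natAdd n i)
    have hc_eq : Fin.append a b = c := Fin.append_castAdd_natAdd
    have horth (u v : Fin n → ZMod 2) (hu : u ∈ C₁) (hv : v ∈ C₂) :
        a ⬝ᵥ u + b ⬝ᵥ (u + v) = 0 := by
      rw [← append_dotProduct_append, hc_eq]
      exact hc _ (mem_plotkin.2 ⟨u, hu, v, hv, rfl⟩)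
    have hb : b ∈ dualCode C₂ := fun v hv => by simpa using horth 0 v C₁.zero_mem hv
    have hab : a + b ∈ dualCode C₁ := fun u hu => by
      simpa [add_dotProduct] using horth u 0 hu C₂.zero_mem
    have ha : a ∈ dualCode C₂ := fun v hv => by
      simpa [add_dotProduct, hb v hv] using hab v (h hv)
    refine mem_plotkin.2 ⟨a, ha, a + b, hab, ?_⟩
    rw [← add_assoc, ZModModule.add_self a, zero_add, hc_eq]
  · rintro _ hc c' hc'
    obtain ⟨a, ha, b, hb, rfl⟩ := mem_plotkin.1 hc
    obtain ⟨u, hu, v, hv, rfl⟩ := mem_plotkin.1 hc'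
    rw [append_dotProduct_append]
    simp [add_dotProduct, dotProduct_add, ha v hv, hb u hu, hb v (h hv),
      ZModModule.add_self]

end Plotkin

section ReedMuller

/-- The length `2 ^ m` of `RM(·, m)`, defined recursively so that `Fin (rmLength (m + 1))` is
definitionally `Fin (rmLength m + rmLength m)`, the type produced by the Plotkin construction. -/
def rmLength : ℕ → ℕ
  | 0 => 1
  | m + 1 => rmLength m + rmLength m

lemma rmLength_pos (m : ℕ) : 0 < rmLength m := by
  induction m with
  | zero => exact Nat.one_pos
  | succ m ih => exact Nat.add_pos_left ih _

/-- `reedMuller r m` is the Reed–Muller code `RM(r - 1, m)`, with `RM(-1, m) = 0`. -/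
def reedMuller : (r m : ℕ) → Submodule (ZMod 2) (Fin (rmLength m) → ZMod 2)
  | 0, _ => ⊥
  | _ + 1, 0 => ⊤
  | r + 1, m + 1 => plotkin (reedMuller (r + 1) m) (reedMuller r m)

lemma reedMuller_le_succ (r m : ℕ) : reedMuller r m ≤ reedMuller (r + 1) m := by
  induction m generalizing r with
  | zero => cases r <;> simp [reedMuller]
  | succ m ih =>
    cases r with
    | zero => exact bot_le
    | succ r => exact plotkin_mono (ih (r + 1)) (ih r)

lemma reedMuller_eq_top {r m : ℕ} (h : m < r) : reedMuller r m = ⊤ := by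
  obtain ⟨r, rfl⟩ := Nat.exists_eq_add_one.2 (Nat.zero_lt_of_lt h)
  induction m generalizing r with
  | zero => rfl
  | succ m ih =>
    obtain ⟨r, rfl⟩ := Nat.exists_eq_add_one.2 (by omega : 0 < r)
    exact (congrArg₂ plotkin (ih (r + 1) (by omega)) (ih r (by omega))).trans plotkin_top_top

lemma dualCode_reedMuller {a b m : ℕ} (h : a + b = m + 1) :
    dualCode (reedMuller a m) = reedMuller b m := by
  induction m generalizing a b with
  | zero =>
    obtain ⟨rfl, rfl⟩ | ⟨rfl, rfl⟩ : a = 0 ∧ b = 1 ∨ a = 1 ∧ b = 0 := by omega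
    · exact dualCode_bot
    · exact dualCode_top
  | succ m ih =>
    rcases a with _ | a
    · rw [reedMuller_eq_top (by omega : m + 1 < b)]
      exact dualCode_bot
    rcases b with _ | b
    · rw [reedMuller_eq_top (by omega : m + 1 < a + 1)]
      exact dualCode_top
    exact (dualCode_plotkin (reedMuller_le_succ a m)).trans
      (congrArg₂ plotkin (ih (by omega)) (ih (by omega)))

lemma minDistGE_reedMuller (r m : ℕ) : MinDistGE (reedMuller r m) (2 ^ (m + 1 - r)) := by
  induction m generalizing r with
  | zero =>
    cases r with
    | zero => exact minDistGE_bot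
    | succ r =>
      intro c _ hc
      rw [show 0 + 1 - (r + 1) = 0 by omega, pow_zero]
      exact hammingNorm_pos_iff.2 hc
  | succ m ih =>
    cases r with
    | zero => exact minDistGE_bot
    | succ r =>
      refine (minDistGE_plotkin (ih (r + 1)) (ih r)).mono (le_min ?_ (le_of_eq (by congr 1; omega)))
      rw [← pow_succ']
      exact Nat.pow_le_pow_right two_pos (by omega)

end ReedMuller

lemma exists_code_minDistGE_dualCode_minDistGE (D : ℕ) :
    ∃ n, ∃ C : Submodule (ZMod 2) (Fin n → ZMod 2), 0 < finrank (ZMod 2) C ∧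
      finrank (ZMod 2) C < n ∧ MinDistGE C D ∧ MinDistGE (dualCode C) D := by
  have hself : dualCode (reedMuller (D + 1) (2 * D + 1)) = reedMuller (D + 1) (2 * D + 1) :=
    dualCode_reedMuller (by omega)
  have hdist : MinDistGE (reedMuller (D + 1) (2 * D + 1)) D := by
    refine (minDistGE_reedMuller _ _).mono ((Nat.lt_two_pow_self).le.trans ?_)
    exact Nat.pow_le_pow_right two_pos (by omega)
  have hrank := finrank_add_finrank_dualCode (reedMuller (D + 1) (2 * D + 1))
  have hlen := rmLength_pos (2 * D + 1)
  rw [hself] at hrank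
  exact ⟨_, _, by omega, by omega, hdist, by rwa [hself]⟩

theorem N_ge_improved_singleton (d dp : ℕ) (hd : 3 ≤ d) (hdp : 3 ≤ dp) :
    N d dp ≥ d + dp := by
  obtain ⟨n, C, hk, hkn, hC, hC'⟩ := exists_code_minDistGE_dualCode_minDistGE (max d dp)
  refine le_csInf ⟨n, C, hk, hkn, hC.mono (le_max_left _ _), hC'.mono (le_max_right _ _)⟩ ?_
  rintro n ⟨C, hk, hkn, hC, hC'⟩
  exact add_le_of_minDistGE hd hdp hk hkn hC hC'
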